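/- A matrix A ∈ ℝ^{m×n} (m, n ≥ 2) preserves Chebyshev systems if and only if all rows and all columns of A are alternance-free. -/

import Mathlib

open Filter

/-- A vector is Chebyshev if all of its components are non-zero. -/
def Cheb {n : ℕ} (v : Fin n → ℝ) : Prop := ∀ i, v i ≠ 0

/-- `mu a v` is the (unique, when `v` is Chebyshev) minimizer of `u ↦ ‖a - u • v‖`,
where `‖·‖` is the sup-norm on `Fin n → ℝ`. -/
noncomputable def mu {n : ℕ} (a v : Fin n → ℝ) : ℝ :=
  Classical.epsilon fun t : ℝ => ∀ u : ℝ, ‖a - t • v‖ ≤ ‖a - u • v‖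

noncomputable def phi {m n : ℕ} (A : Fin m → Fin n → ℝ) (v : Fin n → ℝ) : Fin m → ℝ :=
  fun i => mu (A i) v

noncomputable def psi {m n : ℕ} (A : Fin m → Fin n → ℝ) (u : Fin m → ℝ) : Fin n → ℝ :=
  fun j => mu (fun i => A i j) u

/-- `A` preserves Chebyshev systems. -/
def PreservesCheb {m n : ℕ} (A : Fin m → Fin n → ℝ) : Prop :=
  (∀ v : Fin n → ℝ, Cheb v → Cheb (phi A v)) ∧ (∀ u : Fin m → ℝ, Cheb u → Cheb (psi A u))

/-- A vector is alternance-free if exactly one component attains the max absolute value. -/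
def AlternanceFree {n : ℕ} (a : Fin n → ℝ) : Prop := ∃! i, |a i| = ‖a‖

/-- Chebyshev norm of the residual `A - u vᵀ`. -/
noncomputable def Cerr {m n : ℕ} (A : Fin m → Fin n → ℝ) (u : Fin m → ℝ) (v : Fin n → ℝ) : ℝ :=
  ⨆ i, ⨆ j, |A i j - u i * v j|

/-- Chebyshev norm of a matrix. -/
noncomputable def CnormM {m n : ℕ} (A : Fin m → Fin n → ℝ) : ℝ :=
  ⨆ i, ⨆ j, |A i j|

/-- The sequence `v⁽ᵏ⁾` of the alternating minimization method started at `v0`. -/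
noncomputable def vseq {m n : ℕ} (A : Fin m → Fin n → ℝ) (v0 : Fin n → ℝ) : ℕ → Fin n → ℝ
  | 0 => v0
  | k + 1 => psi A (phi A (vseq A v0 k))

/-! Both conditions split row by row (column by column): `φ(A, v)` is Chebyshev iff
`μ(aⁱ, v) ≠ 0` for every row. If a row `a` peaks at a single index `j₀`, subtracting a small
multiple of `(a j₀ / v j₀) • v` lowers `|a j₀|` and keeps the other coordinates below `‖a‖`, so
`0` is not the minimizer. If `a` peaks at `j₁ ≠ j₂`, a `±1` vector `v` with suitable signs makes the
residual at `j₁` and `j₂` equal to `±(‖a‖ - u)` and `±(‖a‖ + u)`, so `‖a - u • v‖ ≥ ‖a‖ + |u|`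
and the minimizer is `0`. -/

open Topology

lemma exists_forall_norm_sub_smul_le {E : Type*} [NormedAddCommGroup E] [NormedSpace ℝ E]
    (a : E) {v : E} (hv : v ≠ 0) : ∃ t : ℝ, ∀ u : ℝ, ‖a - t • v‖ ≤ ‖a - u • v‖ := by
  refine (by fun_prop : Continuous fun t : ℝ => ‖a - t • v‖).exists_forall_le ?_
  have hlin : Tendsto (fun t : ℝ => ‖t‖ * ‖v‖ - ‖a‖) (cocompact ℝ) atTop :=
    tendsto_atTop_add_const_right _ _
      (tendsto_norm_cocompact_atTop.atTop_mul_const (norm_pos_iff.2 hv))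
  refine tendsto_atTop_mono (fun t => ?_) hlin
  rw [← norm_smul]
  linarith [norm_sub_norm_le (t • v) a, norm_sub_rev (t • v) a]

lemma exists_abs_eq_one_mul_abs (x : ℝ) : ∃ s : ℝ, |s| = 1 ∧ x = s * |x| := by
  rcases le_or_gt 0 x with hx | hx
  · exact ⟨1, abs_one, by rw [abs_of_nonneg hx, one_mul]⟩
  · exact ⟨-1, by simp, by rw [abs_of_neg hx]; ring⟩

section Minimizer

variable {n : ℕ} {a v : Fin n → ℝ}

lemma abs_apply_le_norm (x : Fin n → ℝ) (j : Fin n) : |x j| ≤ ‖x‖ :=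
  norm_le_pi_norm x j

lemma mu_spec (a : Fin n → ℝ) (hv : v ≠ 0) (u : ℝ) : ‖a - mu a v • v‖ ≤ ‖a - u • v‖ :=
  Classical.epsilon_spec (exists_forall_norm_sub_smul_le a hv) u

lemma mu_ne_zero_of_norm_sub_smul_lt {t : ℝ} (ht : ‖a - t • v‖ < ‖a‖) : mu a v ≠ 0 := by
  have hv : v ≠ 0 := by rintro rfl; simp at ht
  intro hmu
  have := mu_spec a hv t
  rw [hmu, zero_smul, sub_zero] at this
  exact this.not_gt ht

lemma mu_eq_zero_of_forall_le (h : ∀ u : ℝ, ‖a‖ + |u| ≤ ‖a - u • v‖) : mu a v = 0 := by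
  have hv : v ≠ 0 := by
    rintro rfl
    have := h 1
    norm_num at this
  simpa using (h (mu a v)).trans (mu_spec a hv 0)

lemma exists_cheb_mu_eq_zero {j₁ j₂ : Fin n} (hj : j₁ ≠ j₂) (h₁ : |a j₁| = ‖a‖)
    (h₂ : |a j₂| = ‖a‖) : ∃ v, Cheb v ∧ mu a v = 0 := by
  obtain ⟨s₁, hs₁, ha₁⟩ := exists_abs_eq_one_mul_abs (a j₁)
  obtain ⟨s₂, hs₂, ha₂⟩ := exists_abs_eq_one_mul_abs (a j₂)
  set v := Function.update (Function.update (1 : Fin n → ℝ) j₁ s₁) j₂ (-s₂)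
  have hv : ∀ j, |v j| = 1 := by
    intro j
    simp only [v, Function.update_apply]
    split_ifs <;> simp [hs₁, hs₂]
  have hv₁ : v j₁ = s₁ := by simp [v, hj]
  have hv₂ : v j₂ = -s₂ := by simp [v]
  refine ⟨v, fun j h => by simpa [h] using hv j, mu_eq_zero_of_forall_le fun u => ?_⟩
  have e₁ : |(a - u • v) j₁| = |‖a‖ - u| := by
    rw [Pi.sub_apply, Pi.smul_apply, hv₁, ha₁, h₁,
      smul_eq_mul, show s₁ * ‖a‖ - u * s₁ = s₁ * (‖a‖ - u) by ring, abs_mul, hs₁, one_mul]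
  have e₂ : |(a - u • v) j₂| = |‖a‖ + u| := by
    rw [Pi.sub_apply, Pi.smul_apply, hv₂, ha₂, h₂,
      smul_eq_mul, show s₂ * ‖a‖ - u * -s₂ = s₂ * (‖a‖ + u) by ring, abs_mul, hs₂, one_mul]
  have b₁ := abs_apply_le_norm (a - u • v) j₁
  have b₂ := abs_apply_le_norm (a - u • v) j₂
  rcases abs_cases u with ⟨hu, -⟩ | ⟨hu, -⟩ <;>
    linarith [le_abs_self (‖a‖ - u), le_abs_self (‖a‖ + u)]

lemma exists_ne_abs_eq_norm_of_not_alternanceFree [NeZero n] (h : ¬ AlternanceFree a) :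
    ∃ j₁ j₂, j₁ ≠ j₂ ∧ |a j₁| = ‖a‖ ∧ |a j₂| = ‖a‖ := by
  obtain ⟨j₁, h₁⟩ := (IsGreatest.pi_norm a).1
  obtain ⟨j₂, h₂, hj⟩ : ∃ j₂, |a j₂| = ‖a‖ ∧ j₂ ≠ j₁ := by
    by_contra! hc
    exact h ⟨j₁, h₁, fun j hj => hc j hj⟩
  exact ⟨j₁, j₂, hj.symm, h₁, h₂⟩

lemma AlternanceFree.exists_norm_sub_smul_lt (hn : 2 ≤ n) (ha : AlternanceFree a) (hv : Cheb v) :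
    ∃ t : ℝ, ‖a - t • v‖ < ‖a‖ := by
  have : Nontrivial (Fin n) := Fin.nontrivial_iff_two_le.2 hn
  obtain ⟨j₀, hj₀, huniq⟩ := ha
  have hlt : ∀ j ≠ j₀, |a j| < ‖a‖ := fun j hj =>
    (abs_apply_le_norm a j).lt_of_ne fun h => hj (huniq j h)
  have hpos : 0 < ‖a‖ := by
    obtain ⟨j, hj⟩ := exists_ne j₀
    exact (abs_nonneg _).trans_lt (hlt j hj)
  -- `c • v` agrees with `a` at `j₀`: small multiples lower the peak at `j₀`, while by continuity
  -- the other coordinates stay below `‖a‖`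
  set c := a j₀ / v j₀
  have hev : ∀ᶠ t in 𝓝[>] (0 : ℝ), ∀ j, |a j - t * c * v j| < ‖a‖ := by
    refine eventually_all.2 fun j => ?_
    rcases eq_or_ne j j₀ with rfl | hj
    · filter_upwards [Ioo_mem_nhdsGT two_pos] with t ht
      have hlin : a j - t * c * v j = (1 - t) * a j := by
        linear_combination (-t) * div_mul_cancel₀ (a j) (hv j)
      rw [hlin, abs_mul, hj₀]
      exact mul_lt_of_lt_one_left hpos (abs_sub_lt_iff.2 ⟨by linarith [ht.1], by linarith [ht.2]⟩)
    · exact nhdsWithin_le_nhds <|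
        ContinuousAt.eventually_lt (by fun_prop) continuousAt_const (by simpa using hlt j hj)
  obtain ⟨t, ht⟩ := hev.exists
  exact ⟨t * c, (pi_norm_lt_iff hpos).2 fun j => by simpa [mul_assoc] using ht j⟩

theorem forall_cheb_mu_ne_zero_iff (hn : 2 ≤ n) (a : Fin n → ℝ) :
    (∀ v, Cheb v → mu a v ≠ 0) ↔ AlternanceFree a := by
  have : NeZero n := ⟨by omega⟩
  refine ⟨fun h => ?_, fun ha v hv => ?_⟩
  · by_contra hna
    obtain ⟨j₁, j₂, hj, h₁, h₂⟩ := exists_ne_abs_eq_norm_of_not_alternanceFree hna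
    obtain ⟨v, hv, hmu⟩ := exists_cheb_mu_eq_zero hj h₁ h₂
    exact h v hv hmu
  · obtain ⟨t, ht⟩ := ha.exists_norm_sub_smul_lt hn hv
    exact mu_ne_zero_of_norm_sub_smul_lt ht

end Minimizer

theorem forall_cheb_phi_iff {m n : ℕ} (hn : 2 ≤ n) (A : Fin m → Fin n → ℝ) :
    (∀ v, Cheb v → Cheb (phi A v)) ↔ ∀ i, AlternanceFree (A i) :=
  ⟨fun h i => (forall_cheb_mu_ne_zero_iff hn (A i)).1 fun v hv => h v hv i,
    fun h v hv i => (forall_cheb_mu_ne_zero_iff hn (A i)).2 (h i) v hv⟩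

theorem stmt5 {m n : ℕ} (hm : 2 ≤ m) (hn : 2 ≤ n) (A : Fin m → Fin n → ℝ) :
    PreservesCheb A ↔
      (∀ i, AlternanceFree (A i)) ∧ (∀ j, AlternanceFree fun i => A i j) :=
  and_congr (forall_cheb_phi_iff hn A) (forall_cheb_phi_iff hm fun j i => A i j)
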